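/- arXiv:2602.11324 — 2 statements merged into one kernel-verified Lean document; each statement's English description precedes it below -/
import Mathlib

section
/- For every positive integer t there exists a constant C_t (depending only on t) such that for all sequences A_1, …, A_t of non-negative integers of common length n, the sparse encoding of the zipped string satisfies |⟨zip(A_1, …, A_t)⟩| ≤ C_t · Σ_{j=1}^{t} |⟨A_j⟩|. -/
namespace SyncFormal

/-- The fragment `T[i..j)` of a string `T`. -/
def frag {α : Type*} (T : List α) (i j : ℕ) : List α :=
  (T.drop i).take (j - i)

/-- `p` is a period of the string `S`. -/
def IsPeriod {α : Type*} (S : List α) (p : ℕ) : Prop :=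
  1 ≤ p ∧ p ≤ S.length ∧ ∀ i : ℕ, i + p < S.length → S[i]? = S[i + p]?

/-- `per S`: the smallest period of `S`. -/
noncomputable def per {α : Type*} (S : List α) : ℕ :=
  sInf {p | IsPeriod S p}

/-- `Sync` is a `τ`-synchronizing set of `T`. -/
def IsSyncSet {α : Type*} (T : List α) (τ : ℕ) (Sync : Set ℕ) : Prop :=
  (∀ i ∈ Sync, i + 2 * τ ≤ T.length) ∧
  (∀ i j : ℕ, i + 2 * τ ≤ T.length → j + 2 * τ ≤ T.length → i ∈ Sync →
    frag T i (i + 2 * τ) = frag T j (j + 2 * τ) → j ∈ Sync) ∧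
  (∀ i : ℕ, i + 3 * τ ≤ T.length + 1 →
    (Set.Ico i (i + τ) ∩ Sync = ∅ ↔ 3 * per (frag T i (i + 3 * τ - 1)) ≤ τ))

/-- `T[b..e)` is a run (maximal repetition) in `T`. -/
def IsRun {α : Type*} (T : List α) (b e : ℕ) : Prop :=
  b < e ∧ e ≤ T.length ∧
  2 * per (frag T b e) ≤ e - b ∧
  (b = 0 ∨ T[b - 1]? ≠ T[b - 1 + per (frag T b e)]?) ∧
  (e = T.length ∨ T[e]? ≠ T[e - per (frag T b e)]?)

/-- `T[b..e)` is a run of length at least `ℓ` and period at most `p`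
(i.e., an element of `RUNS_{ℓ,p}(T)`). -/
def IsRunLP {α : Type*} (T : List α) (ℓ p b e : ℕ) : Prop :=
  IsRun T b e ∧ ℓ ≤ e - b ∧ per (frag T b e) ≤ p

/-- `λ_k = (8/7)^⌊k/2⌋`. -/
noncomputable def lam (k : ℕ) : ℝ := (8 / 7 : ℝ) ^ (k / 2)

/-- `α_0 = 1`, `α_{k+1} = α_k + ⌊λ_k⌋`. -/
noncomputable def alph : ℕ → ℕ
  | 0 => 1
  | k + 1 => alph k + ⌊lam k⌋₊

/-- `m`-fold concatenation `R^m`. -/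
def listPow {α : Type*} (R : List α) : ℕ → List α
  | 0 => []
  | m + 1 => R ++ listPow R m

/-- The length of the primitive root of `S`
(the shortest prefix `R` of `S` with `S = R^m` for some `m ≥ 1`). -/
noncomputable def primRootLen {α : Type*} (S : List α) : ℕ :=
  sInf {r | 0 < r ∧ ∃ m : ℕ, 1 ≤ m ∧ S = listPow (S.take r) m}

/-- `i` and `j` are consecutive elements of the set `S`. -/
def Consecutive (S : Set ℕ) (i j : ℕ) : Prop :=
  i ∈ S ∧ j ∈ S ∧ i < j ∧ ∀ m ∈ S, m ≤ i ∨ j ≤ m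

/-- `(B k)_{k ∈ ℕ}` is a recompression chain for `T`. -/
def IsRecompressionChain {α : Type*} (T : List α) (B : ℕ → Set ℕ) : Prop :=
  B 0 = Set.Ico 1 T.length ∧
  (∀ k, B (k + 1) ⊆ B k) ∧
  (∀ k, B k ⊆ Set.Ico 1 T.length) ∧
  (∀ k, (B k).Finite ∧ ((B k).ncard : ℝ) * lam k ≤ 4 * T.length) ∧
  (∀ k i j : ℕ, alph k ≤ i → i + alph k ≤ T.length → alph k ≤ j → j + alph k ≤ T.length →
    i ∈ B k → frag T (i - alph k) (i + alph k) = frag T (j - alph k) (j + alph k) → j ∈ B k) ∧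
  (∀ k i j : ℕ, Consecutive (B k ∪ {0, T.length}) i j →
    (((j - i : ℕ) : ℝ) ≤ 7 / 4 * lam k ∨ (primRootLen (frag T i j) : ℝ) ≤ lam k))

/-- `k(τ) = max{ j : j = 0 ∨ 16·λ_{j-1} ≤ τ }`. -/
noncomputable def kOf (τ : ℕ) : ℕ :=
  sSup {j : ℕ | j = 0 ∨ 16 * lam (j - 1) ≤ (τ : ℝ)}

/-- The Elias-γ code of a positive integer `x`:
`⌊log₂ x⌋` zeros followed by the binary representation of `x` (MSB first). -/
def eliasGamma (x : ℕ) : List Bool :=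
  List.replicate (Nat.log 2 x) false ++ (Nat.bits x).reverse

/-- Sparse encoding, with `z` pending zeros in front of the remaining sequence. -/
def sparseEncAux : ℕ → List ℕ → List Bool
  | z, [] => if z = 0 then [] else false :: eliasGamma z
  | z, 0 :: rest => sparseEncAux (z + 1) rest
  | z, x :: rest =>
      (if z = 0 then [] else false :: eliasGamma z) ++ (true :: eliasGamma x)
        ++ sparseEncAux 0 rest

/-- The sparse encoding `⟨A⟩` of a sequence of non-negative integers. -/
def sparseEnc (A : List ℕ) : List Bool := sparseEncAux 0 A

/-- Number of bits contributed by the zero-run tokens of the sparse encoding,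
with `z` pending zeros. -/
def zeroRunBitsAux : ℕ → List ℕ → ℕ
  | z, [] => if z = 0 then 0 else 2 * Nat.log 2 z + 2
  | z, 0 :: rest => zeroRunBitsAux (z + 1) rest
  | z, _ :: rest => (if z = 0 then 0 else 2 * Nat.log 2 z + 2) + zeroRunBitsAux 0 rest

/-- Number of bits contributed by zero-run tokens to `⟨A⟩`. -/
def zeroRunBits (A : List ℕ) : ℕ := zeroRunBitsAux 0 A

/-- The natural number whose binary representation (MSB first) is `B`. -/
def bitsToNat (B : List Bool) : ℕ :=
  B.foldl (fun n b => 2 * n + cond b 1 0) 0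

/-- The symbol of the zipped string for a column of values. -/
def zipSym (col : List ℕ) : ℕ :=
  if col.all (· == 0) then 0 else bitsToNat (sparseEnc col)

/-- `zip(A_1, …, A_t)` for sequences of common length `n`. -/
def zipSeqs (A : List (List ℕ)) (n : ℕ) : List ℕ :=
  (List.range n).map fun i => zipSym (A.map fun S => S.getD i 0)

/-- Running a deterministic transducer with transition function `δ` from state `s`
on an input string: returns the state sequence `s_0, …, s_n` and the output string. -/
def runAux {Q Γ I : Type*} (δ : Q → I → Q × Γ) : Q → List I → List Q × List Γ
  | s, [] => ([s], [])
  | s, x :: xs =>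
      (s :: (runAux δ (δ s x).1 xs).1, (δ s x).2 :: (runAux δ (δ s x).1 xs).2)

/-- `R_{ℓ,p}(T) = { i : per(T[i..i+ℓ)) ≤ p }`. -/
def RSet {α : Type*} (T : List α) (ℓ p : ℕ) : Set ℕ :=
  {i | i + ℓ ≤ T.length ∧ per (frag T i (i + ℓ)) ≤ p}

/-
Scan the columns of `A_1, …, A_t` from left to right, keeping for the zipped string and for every
`A_j` the number of zeros not yet encoded. A column of zeros only extends all pending runs, and the
zipped run is never longer than any of them. At a non-zero column some `A_j` has a non-zero entry,
so it pays for a zero-run token at least as long as the zipped one, plus its own literal; the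
literal of the zipped string encodes the column with `O(t)` bits per non-zero entry, and its
γ-code is at most twice as long. This gives `C_t = 2t + 3`.
-/

/-- The length of the token `0·γ(x)` or `1·γ(x)`; no token is written for `x = 0`. -/
def tokenLen (x : ℕ) : ℕ := if x = 0 then 0 else 2 * Nat.log 2 x + 2

/-- Reading `x` with `z` zeros pending, the encoder writes `emittedLen z x` bits and is left with
`pendingZeros z x` pending zeros (see `length_sparseEncAux_cons`). -/
def emittedLen (z x : ℕ) : ℕ := if x = 0 then 0 else tokenLen z + tokenLen x

def pendingZeros (z x : ℕ) : ℕ := if x = 0 then z + 1 else 0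

lemma size_eq_log_add_one {x : ℕ} (hx : x ≠ 0) : Nat.size x = Nat.log 2 x + 1 :=
  le_antisymm (Nat.size_le.mpr (Nat.lt_pow_succ_log_self one_lt_two x))
    (Nat.lt_size.mpr (Nat.pow_log_le_self 2 hx))

lemma eliasGamma_length {x : ℕ} (hx : x ≠ 0) : (eliasGamma x).length = 2 * Nat.log 2 x + 1 := by
  simp only [eliasGamma, List.length_append, List.length_replicate, List.length_reverse,
    Nat.size_eq_bits_len, size_eq_log_add_one hx]
  ring

@[simp]
lemma tokenLen_zero : tokenLen 0 = 0 := rfl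

lemma tokenLen_of_ne_zero {x : ℕ} (hx : x ≠ 0) : tokenLen x = 2 * Nat.log 2 x + 2 := if_neg hx

lemma two_le_tokenLen {x : ℕ} (hx : x ≠ 0) : 2 ≤ tokenLen x := by
  rw [tokenLen_of_ne_zero hx]; omega

lemma tokenLen_mono {a b : ℕ} (h : a ≤ b) : tokenLen a ≤ tokenLen b := by
  rcases Nat.eq_zero_or_pos a with rfl | ha
  · exact Nat.zero_le _
  · rw [tokenLen_of_ne_zero ha.ne', tokenLen_of_ne_zero (by omega)]
    have := Nat.log_mono_right (b := 2) h
    omega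

lemma tokenLen_succ_le (z : ℕ) : tokenLen (z + 1) ≤ tokenLen z + 2 := by
  rcases Nat.eq_zero_or_pos z with rfl | hz
  · simp [tokenLen]
  · have : Nat.log 2 (z + 1) ≤ Nat.log 2 z + 1 :=
      Nat.log_mul_base one_lt_two hz.ne' ▸ Nat.log_mono_right (by omega)
    rw [tokenLen_of_ne_zero hz.ne', tokenLen_of_ne_zero (by omega)]
    omega

lemma tokenLen_le_emittedLen (z x : ℕ) : tokenLen x ≤ emittedLen z x := by
  unfold emittedLen
  split_ifs with hx
  · simp [hx]
  · omega

lemma length_sparseEncAux_nil (z : ℕ) : (sparseEncAux z []).length = tokenLen z := by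
  unfold sparseEncAux tokenLen
  split_ifs with hz
  · rfl
  · simp [eliasGamma_length hz]

lemma length_sparseEncAux_cons (z x : ℕ) (r : List ℕ) :
    (sparseEncAux z (x :: r)).length =
      emittedLen z x + (sparseEncAux (pendingZeros z x) r).length := by
  rcases x with _ | y
  · simp [sparseEncAux, emittedLen, pendingZeros]
  · have hz : (if z = 0 then ([] : List Bool) else false :: eliasGamma z).length = tokenLen z := by
      unfold tokenLen
      split_ifs with hz
      · rfl
      · simp [eliasGamma_length hz]
    simp only [sparseEncAux, List.length_append, List.length_cons, hz,
      eliasGamma_length (Nat.succ_ne_zero y), emittedLen, pendingZeros, tokenLen,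
      Nat.succ_ne_zero, if_false]

lemma length_sparseEncAux_le (L : List ℕ) (z : ℕ) :
    (sparseEncAux z L).length ≤ tokenLen z + 2 * L.length + (L.map tokenLen).sum := by
  induction L generalizing z with
  | nil => simp [length_sparseEncAux_nil]
  | cons x r ih =>
    rw [length_sparseEncAux_cons]
    have := ih (pendingZeros z x)
    simp only [List.length_cons, List.map_cons, List.sum_cons, emittedLen, pendingZeros] at this ⊢
    split_ifs at this ⊢ with hx
    · have := tokenLen_succ_le z
      simp only [hx, tokenLen_zero]
      omega
    · simp only [tokenLen_zero] at this
      omega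

lemma foldl_bits_lt (B : List Bool) (n : ℕ) :
    B.foldl (fun n b => 2 * n + cond b 1 0) n < (n + 1) * 2 ^ B.length := by
  induction B generalizing n with
  | nil => simp
  | cons b r ih =>
    calc r.foldl (fun n b => 2 * n + cond b 1 0) (2 * n + cond b 1 0)
        < (2 * n + cond b 1 0 + 1) * 2 ^ r.length := ih _
      _ ≤ (n + 1) * 2 ^ (r.length + 1) := by
          rw [pow_succ]
          cases b <;> simp only [cond] <;> nlinarith [Nat.one_le_two_pow (n := r.length)]

lemma bitsToNat_lt (B : List Bool) : bitsToNat B < 2 ^ B.length := by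
  simpa [bitsToNat] using foldl_bits_lt B 0

lemma foldl_bits_pos (B : List Bool) (n : ℕ) (h : 0 < n ∨ true ∈ B) :
    0 < B.foldl (fun n b => 2 * n + cond b 1 0) n := by
  induction B generalizing n with
  | nil => simpa using h
  | cons b r ih =>
    apply ih
    cases b <;> simp_all

lemma true_mem_sparseEncAux {L : List ℕ} (hL : ∃ x ∈ L, x ≠ 0) (z : ℕ) :
    true ∈ sparseEncAux z L := by
  induction L generalizing z with
  | nil => simp at hL
  | cons x r ih =>
    rcases x with _ | y
    · exact ih (by simpa using hL) (z + 1)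
    · simp [sparseEncAux]

lemma zipSym_of_exists_ne_zero {c : List ℕ} (hc : ∃ x ∈ c, x ≠ 0) :
    zipSym c = bitsToNat (sparseEnc c) :=
  if_neg (by simpa using hc)

lemma zipSym_eq_zero_iff {c : List ℕ} : zipSym c = 0 ↔ ∀ x ∈ c, x = 0 := by
  by_cases hc : ∃ x ∈ c, x ≠ 0
  · rw [zipSym_of_exists_ne_zero hc]
    refine iff_of_false (foldl_bits_pos _ 0 (.inr (true_mem_sparseEncAux hc 0))).ne' ?_
    simpa using hc
  · push Not at hc
    exact iff_of_true (if_pos (by simpa using hc)) hc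

lemma tokenLen_zipSym_le (c : List ℕ) :
    tokenLen (zipSym c) ≤ 2 * (c.length + 1) * (c.map tokenLen).sum := by
  by_cases hv : zipSym c = 0
  · simp [hv]
  obtain ⟨x, hx, hx0⟩ : ∃ x ∈ c, x ≠ 0 := by
    by_contra! h
    exact hv (zipSym_eq_zero_iff.mpr h)
  have hS : 2 ≤ (c.map tokenLen).sum :=
    (two_le_tokenLen hx0).trans (List.le_sum_of_mem (List.mem_map_of_mem hx))
  have henc : (sparseEnc c).length ≤ 2 * c.length + (c.map tokenLen).sum := by
    simpa [sparseEnc] using length_sparseEncAux_le c 0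
  have hlog : Nat.log 2 (zipSym c) < (sparseEnc c).length := by
    refine Nat.log_lt_of_lt_pow hv ?_
    rw [zipSym_of_exists_ne_zero ⟨x, hx, hx0⟩]
    exact bitsToNat_lt _
  rw [tokenLen_of_ne_zero hv]
  nlinarith

lemma sum_map_eq_sum_range_getD {α : Type*} (L : List α) (d : α) (f : α → ℕ) :
    (L.map f).sum = ∑ j ∈ Finset.range L.length, f (L.getD j d) := by
  induction L with
  | nil => simp
  | cons x r ih => simp [Finset.sum_range_succ', ih, add_comm]

lemma getD_mem {α : Type*} {c : List α} {j : ℕ} (d : α) (hj : j < c.length) :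
    c.getD j d ∈ c := by
  rw [List.getD_eq_getElem _ _ hj]
  exact List.getElem_mem hj

lemma emittedLen_zipSym_le {c : List ℕ} {z : ℕ} {zs : ℕ → ℕ}
    (hz : ∀ j < c.length, z ≤ zs j) :
    emittedLen z (zipSym c) ≤
      (2 * c.length + 3) * ∑ j ∈ Finset.range c.length, emittedLen (zs j) (c.getD j 0) := by
  by_cases hv : zipSym c = 0
  · simp [emittedLen, hv]
  obtain ⟨j₀, hj₀, hj₀0⟩ : ∃ j < c.length, c.getD j 0 ≠ 0 := by
    by_contra! h
    refine hv (zipSym_eq_zero_iff.mpr fun x hx => ?_)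
    obtain ⟨j, hj, rfl⟩ := List.getElem_of_mem hx
    have := h j hj
    rwa [List.getD_eq_getElem _ _ hj] at this
  set E := ∑ j ∈ Finset.range c.length, emittedLen (zs j) (c.getD j 0)
  have hpending : tokenLen z ≤ E :=
    calc tokenLen z ≤ tokenLen (zs j₀) := tokenLen_mono (hz j₀ hj₀)
      _ ≤ emittedLen (zs j₀) (c.getD j₀ 0) := by rw [emittedLen, if_neg hj₀0]; omega
      _ ≤ E := Finset.single_le_sum (f := fun j => emittedLen (zs j) (c.getD j 0))
          (fun _ _ => Nat.zero_le _) (Finset.mem_range.mpr hj₀)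
  have hliteral : tokenLen (zipSym c) ≤ 2 * (c.length + 1) * E :=
    calc tokenLen (zipSym c) ≤ 2 * (c.length + 1) * (c.map tokenLen).sum := tokenLen_zipSym_le c
      _ ≤ 2 * (c.length + 1) * E := by
          rw [sum_map_eq_sum_range_getD c 0]
          exact Nat.mul_le_mul_left _ (Finset.sum_le_sum fun j _ => tokenLen_le_emittedLen _ _)
  rw [emittedLen, if_neg hv]
  nlinarith

lemma pendingZeros_zipSym_le {c : List ℕ} {x z z' : ℕ} (hx : x ∈ c) (hz : z ≤ z') :
    pendingZeros z (zipSym c) ≤ pendingZeros z' x := by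
  unfold pendingZeros
  split_ifs with hv hx0
  · omega
  · exact absurd (zipSym_eq_zero_iff.mp hv x hx) hx0
  all_goals omega

lemma length_sparseEncAux_zipSym_le {t : ℕ} (ht : 1 ≤ t) (cols : List (List ℕ))
    (hcols : ∀ c ∈ cols, c.length = t) (z : ℕ) (zs : ℕ → ℕ)
    (hz : ∀ j < t, z ≤ zs j) :
    (sparseEncAux z (cols.map zipSym)).length ≤
      (2 * t + 3) * ∑ j ∈ Finset.range t,
        (sparseEncAux (zs j) (cols.map fun c => c.getD j 0)).length := by
  induction cols generalizing z zs with
  | nil =>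
    simp only [List.map_nil, length_sparseEncAux_nil]
    calc tokenLen z ≤ tokenLen (zs 0) := tokenLen_mono (hz 0 ht)
      _ ≤ ∑ j ∈ Finset.range t, tokenLen (zs j) :=
          Finset.single_le_sum (f := fun j => tokenLen (zs j)) (fun _ _ => Nat.zero_le _)
            (Finset.mem_range.mpr ht)
      _ ≤ (2 * t + 3) * ∑ j ∈ Finset.range t, tokenLen (zs j) :=
          Nat.le_mul_of_pos_left _ (by omega)
  | cons c rest ih =>
    have hc : c.length = t := hcols c List.mem_cons_self
    simp only [List.map_cons, length_sparseEncAux_cons, Finset.sum_add_distrib, mul_add]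
    refine add_le_add (hc ▸ emittedLen_zipSym_le (hc ▸ hz))
      (ih (fun c' h => hcols c' (List.mem_cons_of_mem c h)) _ _ fun j hj => ?_)
    exact pendingZeros_zipSym_le (getD_mem 0 (hc ▸ hj)) (hz j hj)

lemma map_getD_transpose {A : List (List ℕ)} {n j : ℕ} (hA : ∀ S ∈ A, S.length = n)
    (hj : j < A.length) :
    ((List.range n).map fun i => A.map fun S => S.getD i 0).map (fun c => c.getD j 0) = A[j] := by
  have hlen := hA _ (List.getElem_mem hj)
  refine List.ext_getElem (by simp [hlen]) fun i _ hi => ?_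
  simp [List.getD_eq_getElem?_getD, hj, List.getElem?_eq_getElem hi]

/-- `|⟨zip(A_1, …, A_t)⟩| ≤ C_t · Σ_j |⟨A_j⟩|` for a constant `C_t`
depending only on `t`. -/
theorem statement11 (t : ℕ) (ht : 1 ≤ t) : ∃ C : ℝ, 0 < C ∧
    ∀ (n : ℕ) (A : List (List ℕ)), A.length = t → (∀ S ∈ A, S.length = n) →
      ((sparseEnc (zipSeqs A n)).length : ℝ) ≤
        C * (((A.map fun S => (sparseEnc S).length).sum : ℕ) : ℝ) := by
  refine ⟨((2 * t + 3 : ℕ) : ℝ), by positivity, fun n A hAt hA => ?_⟩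
  subst hAt
  set cols := (List.range n).map fun i => A.map fun S => S.getD i 0
  have hzip : zipSeqs A n = cols.map zipSym := by simp [zipSeqs, cols]
  have hrows : ∀ j ∈ Finset.range A.length, (sparseEncAux 0 (cols.map (·.getD j 0))).length =
      (sparseEnc (A.getD j [])).length := fun j hj => by
    rw [map_getD_transpose hA (Finset.mem_range.mp hj),
      List.getD_eq_getElem _ _ (Finset.mem_range.mp hj), sparseEnc]
  have hbound := length_sparseEncAux_zipSym_le ht cols (by simp [cols]) 0 (fun _ => 0)
    (fun _ _ => le_rfl)
  rw [Finset.sum_congr rfl hrows, ← sum_map_eq_sum_range_getD A [] fun S => (sparseEnc S).length,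
    ← hzip] at hbound
  exact_mod_cast hbound

end SyncFormal
end

section
/- Let T be a string of length n and let T[i..j) be a periodic fragment of T (i.e., j − i ≥ 1 and per(T[i..j)) ≤ (j−i)/2). Then there exists a unique run T[i'..j') ∈ RUNS(T) such that i' ≤ i, j ≤ j', and per(T[i'..j')) = per(T[i..j)). -/
namespace SyncFormal

/-- Index-form period predicate on `T` over the interval `[b, e)`. -/
private def PredP {α : Type*} (T : List α) (p b e : ℕ) : Prop :=
  ∀ x : ℕ, b ≤ x → x + p < e → T[x]? = T[x + p]?

private lemma frag_getElem? {α : Type*} (T : List α) (b e t : ℕ) :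
    (frag T b e)[t]? = if t < e - b then T[b + t]? else none := by
  simp [frag, List.getElem?_take, List.getElem?_drop]

private lemma frag_length {α : Type*} (T : List α) {b e : ℕ} (hbe : b ≤ e)
    (he : e ≤ T.length) : (frag T b e).length = e - b := by
  simp [frag]; omega

private lemma frag_ne_nil {α : Type*} {T : List α} {b e : ℕ} (h : b < e)
    (he : e ≤ T.length) : frag T b e ≠ [] := by
  apply List.ne_nil_of_length_pos
  rw [frag_length T h.le he]; omega

private lemma isPeriod_frag_iff {α : Type*} (T : List α) (p : ℕ) {b e : ℕ}
    (hbe : b ≤ e) (he : e ≤ T.length) :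
    IsPeriod (frag T b e) p ↔ 1 ≤ p ∧ b + p ≤ e ∧ PredP T p b e := by
  have hlen := frag_length T hbe he
  constructor
  · rintro ⟨h1, h2, h3⟩
    rw [hlen] at h2
    refine ⟨h1, by omega, fun x hx hxe => ?_⟩
    have h4 := h3 (x - b) (by omega)
    rw [frag_getElem?, frag_getElem?, if_pos (show x - b < e - b by omega),
      if_pos (show x - b + p < e - b by omega)] at h4
    have e1 : b + (x - b) = x := by omega
    have e2 : b + (x - b + p) = x + p := by omega
    rwa [e1, e2] at h4
  · rintro ⟨h1, h2, h3⟩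
    refine ⟨h1, by omega, fun t ht => ?_⟩
    rw [hlen] at ht
    rw [frag_getElem?, frag_getElem?, if_pos (by omega : t < e - b), if_pos ht,
      ← Nat.add_assoc]
    exact h3 (b + t) (by omega) (by omega)

private lemma isPeriod_length {α : Type*} {S : List α} (hS : S ≠ []) :
    IsPeriod S S.length :=
  ⟨List.length_pos_iff.2 hS, le_rfl, fun _ hi => absurd hi (by omega)⟩

private lemma per_isPeriod {α : Type*} {S : List α} (hS : S ≠ []) : IsPeriod S (per S) :=
  Nat.sInf_mem ⟨S.length, (Set.mem_setOf_eq ▸ isPeriod_length hS : S.length ∈ {p | IsPeriod S p})⟩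

private lemma per_le {α : Type*} {S : List α} {p : ℕ} (h : IsPeriod S p) : per S ≤ p :=
  Nat.sInf_le h

/-- Two runs with the same smallest period `p`, both containing a fragment of length
`≥ 2p`, coincide. -/
private lemma runs_eq {α : Type*} (T : List α) {p i j b1 e1 b2 e2 : ℕ}
    (hij : i < j) (hj : j ≤ T.length) (hp2 : i + 2 * p ≤ j)
    (h1 : IsRun T b1 e1) (hb1 : b1 ≤ i) (he1 : j ≤ e1) (hq1 : per (frag T b1 e1) = p)
    (h2 : IsRun T b2 e2) (hb2 : b2 ≤ i) (he2 : j ≤ e2) (hq2 : per (frag T b2 e2) = p) :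
    b1 = b2 ∧ e1 = e2 := by
  obtain ⟨hlt1, hle1, hper1, hL1, hR1⟩ := h1
  obtain ⟨hlt2, hle2, hper2, hL2, hR2⟩ := h2
  rw [hq1] at hL1 hR1
  rw [hq2] at hL2 hR2
  have hP1 : PredP T p b1 e1 :=
    ((isPeriod_frag_iff T p hlt1.le hle1).1 (hq1 ▸ per_isPeriod (frag_ne_nil hlt1 hle1))).2.2
  have hP2 : PredP T p b2 e2 :=
    ((isPeriod_frag_iff T p hlt2.le hle2).1 (hq2 ▸ per_isPeriod (frag_ne_nil hlt2 hle2))).2.2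
  have hU : PredP T p (min b1 b2) (max e1 e2) := by
    intro x hx hxe
    by_cases hc1 : b1 ≤ x ∧ x + p < e1
    · exact hP1 x hc1.1 hc1.2
    · exact hP2 x (by omega) (by omega)
  have hbb : b1 = b2 := by
    rcases Nat.lt_trichotomy b1 b2 with h | h | h
    · rcases hL2 with h0 | hne
      · omega
      · exact absurd (hU (b2 - 1) (by omega) (by omega)) hne
    · exact h
    · rcases hL1 with h0 | hne
      · omega
      · exact absurd (hU (b1 - 1) (by omega) (by omega)) hne
  have hee : e1 = e2 := by
    rcases Nat.lt_trichotomy e1 e2 with h | h | h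
    · rcases hR1 with h0 | hne
      · omega
      · have h4 := hU (e1 - p) (by omega) (by omega)
        rw [show e1 - p + p = e1 by omega] at h4
        exact absurd h4.symm hne
    · exact h
    · rcases hR2 with h0 | hne
      · omega
      · have h4 := hU (e2 - p) (by omega) (by omega)
        rw [show e2 - p + p = e2 by omega] at h4
        exact absurd h4.symm hne
  exact ⟨hbb, hee⟩

/-- Every periodic fragment `T[i..j)` extends to a unique run `T[i'..j')`
with `i' ≤ i`, `j ≤ j'`, and the same smallest period. -/
theorem statement13 {α : Type*} (T : List α) (i j : ℕ) (hij : i < j) (hj : j ≤ T.length)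
    (hper : 2 * per (frag T i j) ≤ j - i) :
    ∃! be : ℕ × ℕ, IsRun T be.1 be.2 ∧ be.1 ≤ i ∧ j ≤ be.2 ∧
      per (frag T be.1 be.2) = per (frag T i j) := by
  set p := per (frag T i j) with hpdef
  have hfne : frag T i j ≠ [] := frag_ne_nil hij hj
  obtain ⟨hp1, hpij, hPij⟩ := (isPeriod_frag_iff T p hij.le hj).1 (per_isPeriod hfne)
  have hp2 : i + 2 * p ≤ j := by
    have := frag_length T hij.le hj
    omega
  -- left extension
  set B : Set ℕ := {b | b ≤ i ∧ PredP T p b j} with hBdef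
  have hiB : i ∈ B := ⟨le_rfl, hPij⟩
  set b0 := sInf B with hb0def
  obtain ⟨hb0i, hPb0j⟩ : b0 ∈ B := Nat.sInf_mem ⟨i, hiB⟩
  have hLmax : b0 = 0 ∨ T[b0 - 1]? ≠ T[b0 - 1 + p]? := by
    by_cases h0 : b0 = 0
    · exact Or.inl h0
    · right
      intro heq
      have hmem : b0 - 1 ∈ B := by
        refine ⟨by omega, fun x hx hxp => ?_⟩
        rcases Nat.lt_or_ge x b0 with h | h
        · have hx1 : x = b0 - 1 := by omega
          rw [hx1]; exact heq
        · exact hPb0j x h hxp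
      have := Nat.sInf_le hmem
      omega
  -- right extension
  set E : Set ℕ := {e | e ≤ T.length ∧ j ≤ e ∧ PredP T p b0 e} with hEdef
  have hjE : j ∈ E := ⟨hj, le_rfl, hPb0j⟩
  have hEbdd : BddAbove E := ⟨T.length, fun e he => he.1⟩
  set e0 := sSup E with he0def
  obtain ⟨he0T, hje0, hPb0e0⟩ : e0 ∈ E := Nat.sSup_mem ⟨j, hjE⟩ hEbdd
  have hRmax : e0 = T.length ∨ T[e0]? ≠ T[e0 - p]? := by
    by_cases h0 : e0 = T.length
    · exact Or.inl h0
    · right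
      intro heq
      have hmem : e0 + 1 ∈ E := by
        refine ⟨by omega, by omega, fun x hx hxp => ?_⟩
        rcases Nat.lt_or_ge (x + p) e0 with h | h
        · exact hPb0e0 x hx h
        · have hx1 : x = e0 - p := by omega
          rw [hx1, show e0 - p + p = e0 by omega]
          exact heq.symm
      have := le_csSup hEbdd hmem
      omega
  -- the extension has the same smallest period
  have hb0e0 : b0 < e0 := by omega
  have hple : per (frag T b0 e0) ≤ p :=
    per_le ((isPeriod_frag_iff T p hb0e0.le he0T).2 ⟨hp1, by omega, hPb0e0⟩)
  have hpeq : per (frag T b0 e0) = p := by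
    obtain ⟨hq1, hq2, hPq⟩ :=
      (isPeriod_frag_iff T _ hb0e0.le he0T).1 (per_isPeriod (frag_ne_nil hb0e0 he0T))
    have hge : p ≤ per (frag T b0 e0) := by
      apply per_le
      refine (isPeriod_frag_iff T _ hij.le hj).2 ⟨hq1, by omega, fun x hx hxp => ?_⟩
      exact hPq x (by omega) (by omega)
    omega
  have hrun : IsRun T b0 e0 := by
    refine ⟨hb0e0, he0T, ?_, ?_, ?_⟩
    · rw [hpeq]; omega
    · rw [hpeq]; exact hLmax
    · rw [hpeq]; exact hRmax
  refine ⟨(b0, e0), ⟨hrun, hb0i, hje0, hpeq⟩, ?_⟩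
  rintro ⟨b, e⟩ ⟨hr, hbi, hje, hpe⟩
  obtain ⟨hb, he⟩ := runs_eq T hij hj hp2 hr hbi hje hpe hrun hb0i hje0 hpeq
  exact Prod.ext hb he

end SyncFormal
end
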